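/- Let F be a finite field with q elements, n a positive natural number, and A, B, C be n×n matrices over F with AB ≠ C. Then the number of vectors v ∈ F^n satisfying A(Bv) = Cv is at most q^(n-1). -/

import Mathlib

open Module Matrix

theorem Submodule.natCard_le_pow_finrank_sub_one_of_ne_top {K V : Type*} [Field K] [Finite K]
    [AddCommGroup V] [Module K V] [FiniteDimensional K V] {p : Submodule K V} (hp : p ≠ ⊤) :
    Nat.card p ≤ Nat.card K ^ (finrank K V - 1) := by
  rw [Module.natCard_eq_pow_finrank (K := K)]
  have : finrank K p < finrank K V := Submodule.finrank_lt hp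
  exact Nat.pow_le_pow_right Nat.card_pos (by omega)

theorem Matrix.ker_mulVecLin_ne_top {m n R : Type*} [CommSemiring R] [Fintype n]
    {M : Matrix m n R} (hM : M ≠ 0) : LinearMap.ker M.mulVecLin ≠ ⊤ := by
  classical
  rw [Ne, LinearMap.ker_eq_top, ← toLin'_apply', LinearEquiv.map_eq_zero_iff]
  exact hM

theorem Matrix.mulVec_mulVec_eq_mulVec_iff_mem_ker {l m n R : Type*} [CommRing R] [Fintype m]
    [Fintype n] (A : Matrix l m R) (B : Matrix m n R) (C : Matrix l n R) (v : n → R) :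
    A *ᵥ (B *ᵥ v) = C *ᵥ v ↔ v ∈ LinearMap.ker (A * B - C).mulVecLin := by
  rw [LinearMap.mem_ker, mulVecLin_apply, sub_mulVec, sub_eq_zero, mulVec_mulVec]

theorem freivalds_soundness_general (F : Type*) [Field F] [Fintype F] (q : ℕ)
    (hq : Fintype.card F = q) (n : ℕ)
    (A B C : Matrix (Fin n) (Fin n) F) (hne : A * B ≠ C) :
    Nat.card {v : Fin n → F // A.mulVec (B.mulVec v) = C.mulVec v} ≤ q ^ (n - 1) := by
  have hker : LinearMap.ker (A * B - C).mulVecLin ≠ ⊤ :=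
    ker_mulVecLin_ne_top (sub_ne_zero.mpr hne)
  calc Nat.card {v : Fin n → F // A *ᵥ (B *ᵥ v) = C *ᵥ v}
      = Nat.card (LinearMap.ker (A * B - C).mulVecLin) :=
        Nat.card_congr (Equiv.subtypeEquivRight
          (mulVec_mulVec_eq_mulVec_iff_mem_ker A B C))
    _ ≤ Nat.card F ^ (finrank F (Fin n → F) - 1) :=
        Submodule.natCard_le_pow_finrank_sub_one_of_ne_top hker
    _ = q ^ (n - 1) := by rw [Nat.card_eq_fintype_card, hq, finrank_fin_fun]

theorem freivalds_soundness (F : Type*) [Field F] [Fintype F] (q : ℕ)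
    (hq : Fintype.card F = q) (n : ℕ) (hn : 0 < n)
    (A B C : Matrix (Fin n) (Fin n) F) (hne : A * B ≠ C) :
    Nat.card {v : Fin n → F // A.mulVec (B.mulVec v) = C.mulVec v} ≤ q ^ (n - 1) :=
  freivalds_soundness_general F q hq n A B C hne
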